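/- Let 0 < q < 1 and let n be a nonnegative integer. For every triple of nonnegative integers (i, j, k) with i + j + k = n, there exist nonnegative real numbers a_{rst} ≥ 0, indexed by nonnegative integers r, s, t with r + s + t = n, such that for all real u, v: B^n_{ijk}(u,v) = Σ_{r+s+t=n} a_{rst} · b^n_{rst}(u,v). Equivalently, the matrix A of change of bases expressing the triangular q-Bernstein polynomials in terms of the classical triangular Bernstein polynomials of degree n has all entries nonnegative. -/

import Mathlib

open Finset

/-- The q-integer [r] = 1 + q + ... + q^(r-1). -/
noncomputable def qInt (q : ℝ) (r : ℕ) : ℝ := ∑ s ∈ Finset.range r, q ^ s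

/-- The q-factorial [r]!. -/
noncomputable def qFact (q : ℝ) : ℕ → ℝ
  | 0 => 1
  | r + 1 => qInt q (r + 1) * qFact q r

/-- The q-binomial coefficient [i choose j]_q (zero unless i ≥ j ≥ 0). -/
noncomputable def qBinom (q : ℝ) (i j : ℕ) : ℝ :=
  if j ≤ i then qFact q i / (qFact q j * qFact q (i - j)) else 0

/-- The q-binomial coefficient with integer indices, zero unless i ≥ j ≥ 0. -/
noncomputable def qBinomZ (q : ℝ) (i j : ℤ) : ℝ :=
  if 0 ≤ j ∧ j ≤ i then qFact q i.toNat / (qFact q j.toNat * qFact q (i - j).toNat) else 0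

/-- The triangular q-Bernstein polynomial B^n_{ijk}(u,v)
    (meaningful for i + j + k = n). -/
noncomputable def triB (q : ℝ) (n i j k : ℕ) (u v : ℝ) : ℝ :=
  qBinom q n k * (Nat.choose (i + j) i : ℝ) * u ^ i * v ^ j *
    ∏ s ∈ Finset.range k, (1 - q ^ s * u - q ^ s * v)

/-- The triangular q-Bernstein polynomial with integer indices; by convention it is
    zero whenever any of the indices is negative. -/
noncomputable def triBZ (q : ℝ) (n : ℕ) (i j k : ℤ) (u v : ℝ) : ℝ :=
  if 0 ≤ i ∧ 0 ≤ j ∧ 0 ≤ k then triB q n i.toNat j.toNat k.toNat u v else 0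

/-- The classical triangular Bernstein polynomial b^n_{ijk}(u,v). -/
noncomputable def triBern (n i j k : ℕ) (u v : ℝ) : ℝ :=
  (Nat.factorial n : ℝ) /
      ((Nat.factorial i : ℝ) * (Nat.factorial j : ℝ) * (Nat.factorial k : ℝ)) *
    u ^ i * v ^ j * (1 - u - v) ^ k

/-- The set of triples (i, j, k) of nonnegative integers with i + j + k = n. -/
def simplex (n : ℕ) : Finset (ℕ × ℕ × ℕ) :=
  (Finset.range (n + 1) ×ˢ Finset.range (n + 1) ×ˢ Finset.range (n + 1)).filter
    (fun p => p.1 + p.2.1 + p.2.2 = n)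

open scoped NNReal

/-!
Writing `w = 1 - u - v`, each factor of the q-product is
`1 - qˢu - qˢv = (1 - qˢ) u + (1 - qˢ) v + w`, a combination of `u, v, w` with nonnegative
coefficients because `0 < q < 1`. Hence `B^n_{ijk}` is a nonnegative combination of the
monomials `uᵃ vᵇ wᶜ` with `a + b + c = n`, and each such monomial is the positive multiple
`a! b! c! / n!` of `b^n_{abc}`.
-/

lemma mem_simplex {n : ℕ} {p : ℕ × ℕ × ℕ} : p ∈ simplex n ↔ p.1 + p.2.1 + p.2.2 = n := by
  simp only [simplex, Finset.mem_filter, Finset.mem_product, Finset.mem_range]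
  omega

lemma qInt_pos {q : ℝ} (hq : 0 < q) {r : ℕ} (hr : 0 < r) : 0 < qInt q r :=
  Finset.sum_pos (fun s _ => pow_pos hq s) (Finset.nonempty_range_iff.mpr hr.ne')

lemma qFact_pos {q : ℝ} (hq : 0 < q) : ∀ r, 0 < qFact q r
  | 0 => by simp [qFact]
  | r + 1 => mul_pos (qInt_pos hq r.succ_pos) (qFact_pos hq r)

lemma qBinom_nonneg {q : ℝ} (hq : 0 < q) (i j : ℕ) : 0 ≤ qBinom q i j := by
  unfold qBinom
  split_ifs
  · exact div_nonneg (qFact_pos hq i).le (mul_pos (qFact_pos hq j) (qFact_pos hq (i - j))).le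
  · exact le_rfl

def barycentricMonomial (p : ℕ × ℕ × ℕ) (u v : ℝ) : ℝ :=
  u ^ p.1 * v ^ p.2.1 * (1 - u - v) ^ p.2.2

lemma barycentricMonomial_add (p p' : ℕ × ℕ × ℕ) :
    barycentricMonomial (p + p') = barycentricMonomial p * barycentricMonomial p' := by
  funext u v
  simp only [barycentricMonomial, Prod.fst_add, Prod.snd_add, Pi.mul_apply, pow_add]
  ring

lemma barycentricMonomial_eq_smul_triBern (n : ℕ) (p : ℕ × ℕ × ℕ) :
    barycentricMonomial p =
      ((p.1.factorial * p.2.1.factorial * p.2.2.factorial / n.factorial : ℝ)) •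
        fun u v => triBern n p.1 p.2.1 p.2.2 u v := by
  funext u v
  have hn : (n.factorial : ℝ) ≠ 0 := by positivity
  simp only [barycentricMonomial, triBern, Pi.smul_apply, smul_eq_mul]
  field_simp

def monomialCone (n : ℕ) : Submodule ℝ≥0 (ℝ → ℝ → ℝ) :=
  Submodule.span ℝ≥0 (barycentricMonomial '' simplex n)

lemma barycentricMonomial_mem_monomialCone {n : ℕ} {p : ℕ × ℕ × ℕ} (hp : p ∈ simplex n) :
    barycentricMonomial p ∈ monomialCone n :=
  Submodule.subset_span ⟨p, hp, rfl⟩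

lemma monomialCone_mul_le (k m : ℕ) : monomialCone k * monomialCone m ≤ monomialCone (k + m) := by
  rw [monomialCone, monomialCone, Submodule.span_mul_span]
  refine Submodule.span_mono ?_
  rintro _ ⟨_, ⟨p, hp, rfl⟩, _, ⟨p', hp', rfl⟩, rfl⟩
  refine ⟨p + p', ?_, barycentricMonomial_add p p'⟩
  rw [Finset.mem_coe, mem_simplex] at *
  simp only [Prod.fst_add, Prod.snd_add]
  omega

lemma mul_mem_monomialCone {k m : ℕ} {f g : ℝ → ℝ → ℝ} (hf : f ∈ monomialCone k)
    (hg : g ∈ monomialCone m) : f * g ∈ monomialCone (k + m) :=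
  monomialCone_mul_le k m (Submodule.mul_mem_mul hf hg)

lemma prod_range_mem_monomialCone {f : ℕ → ℝ → ℝ → ℝ} (k : ℕ)
    (hf : ∀ s < k, f s ∈ monomialCone 1) : ∏ s ∈ Finset.range k, f s ∈ monomialCone k := by
  induction k with
  | zero =>
    have hone : (1 : ℝ → ℝ → ℝ) = barycentricMonomial 0 := by
      funext u v
      simp [barycentricMonomial]
    rw [Finset.prod_range_zero, hone]
    exact barycentricMonomial_mem_monomialCone (mem_simplex.2 rfl)
  | succ k ih =>
    rw [Finset.prod_range_succ]
    exact mul_mem_monomialCone (ih fun s hs => hf s (by omega)) (hf k k.lt_succ_self)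

lemma qFactor_mem_monomialCone {q : ℝ} (hq0 : 0 < q) (hq1 : q < 1) (s : ℕ) :
    (fun u v => 1 - q ^ s * u - q ^ s * v) ∈ monomialCone 1 := by
  obtain ⟨c, hc⟩ : ∃ c : ℝ≥0, (c : ℝ) = 1 - q ^ s :=
    ⟨_, Real.coe_toNNReal _ (sub_nonneg.2 (pow_le_one₀ hq0.le hq1.le))⟩
  have hfactor : (fun u v => 1 - q ^ s * u - q ^ s * v) =
      c • barycentricMonomial (1, 0, 0) + c • barycentricMonomial (0, 1, 0) +
        barycentricMonomial (0, 0, 1) := by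
    funext u v
    simp only [Pi.add_apply, NNReal.smul_def, Pi.smul_apply, smul_eq_mul, hc, barycentricMonomial]
    ring
  have hmem (p : ℕ × ℕ × ℕ) (hp : p.1 + p.2.1 + p.2.2 = 1) :
      barycentricMonomial p ∈ monomialCone 1 :=
    barycentricMonomial_mem_monomialCone (mem_simplex.2 hp)
  rw [hfactor]
  exact add_mem (add_mem (Submodule.smul_mem _ c (hmem (1, 0, 0) rfl))
    (Submodule.smul_mem _ c (hmem (0, 1, 0) rfl))) (hmem (0, 0, 1) rfl)

lemma triB_mem_monomialCone {q : ℝ} (hq0 : 0 < q) (hq1 : q < 1) {n i j k : ℕ}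
    (hijk : i + j + k = n) : (fun u v => triB q n i j k u v) ∈ monomialCone n := by
  obtain ⟨C, hC⟩ : ∃ C : ℝ≥0, (C : ℝ) = qBinom q n k * (i + j).choose i :=
    ⟨_, Real.coe_toNNReal _ (mul_nonneg (qBinom_nonneg hq0 n k) (Nat.cast_nonneg _))⟩
  have htriB : (fun u v => triB q n i j k u v) = C • (barycentricMonomial (i, j, 0) *
      ∏ s ∈ Finset.range k, fun u v => 1 - q ^ s * u - q ^ s * v) := by
    funext u v
    simp only [NNReal.smul_def, Pi.smul_apply, Pi.mul_apply, Finset.prod_apply, smul_eq_mul, hC,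
      triB, barycentricMonomial]
    ring
  rw [htriB, ← hijk]
  exact Submodule.smul_mem _ C (mul_mem_monomialCone
    (barycentricMonomial_mem_monomialCone (mem_simplex.2 rfl))
    (prod_range_mem_monomialCone k fun s _ => qFactor_mem_monomialCone hq0 hq1 s))

lemma exists_triBern_expansion_of_mem_monomialCone {n : ℕ} {f : ℝ → ℝ → ℝ}
    (hf : f ∈ monomialCone n) :
    ∃ a : ℕ × ℕ × ℕ → ℝ, (∀ p ∈ simplex n, 0 ≤ a p) ∧
      ∀ u v : ℝ, f u v = ∑ p ∈ simplex n, a p * triBern n p.1 p.2.1 p.2.2 u v := by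
  obtain ⟨c, rfl⟩ := (Submodule.mem_span_image_finset_iff_exists_fun' ℝ≥0).1 hf
  refine ⟨fun p => c p * (p.1.factorial * p.2.1.factorial * p.2.2.factorial / n.factorial),
    fun p _ => by positivity, fun u v => ?_⟩
  rw [Finset.sum_apply, Finset.sum_apply]
  refine Finset.sum_congr rfl fun p _ => ?_
  rw [barycentricMonomial_eq_smul_triBern n p]
  simp only [NNReal.smul_def, Pi.smul_apply, smul_eq_mul]
  ring

/-- each triangular q-Bernstein polynomial is a nonnegative combination of
    the classical triangular Bernstein polynomials of the same degree. -/
theorem stmt10 (q : ℝ) (hq0 : 0 < q) (hq1 : q < 1) (n : ℕ)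
    (i j k : ℕ) (hijk : i + j + k = n) :
    ∃ a : ℕ × ℕ × ℕ → ℝ, (∀ p ∈ simplex n, 0 ≤ a p) ∧
      ∀ u v : ℝ,
        triB q n i j k u v = ∑ p ∈ simplex n, a p * triBern n p.1 p.2.1 p.2.2 u v :=
  exists_triBern_expansion_of_mem_monomialCone (triB_mem_monomialCone hq0 hq1 hijk)
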